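/- In the customer-dependent (CD) case, define for each nonempty proper subset D ⊊ C the condition |S(D)|/|S| > (Σ_{c∈D} α_c m_c)/(Σ_{c∈C} α_c m_c), where S(D) is the set of servers compatible with some type in D. If this condition holds for all nonempty proper D, then for any ordered partition (S_1,...,S_L) of S with L ≥ 2 satisfying U(S_1) ≠ ∅ (where U(S_1) = C \ C(S \ S_1)), the velocities v_1 = |S_1| / Σ_{c ∈ U(S_1)} α_c m_c and v_L = |S_L| / Σ_{c ∈ C(S_L)} α_c m_c satisfy v_1 > |S| / Σ_{c ∈ C} α_c m_c > v_L. -/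

import Mathlib

open Finset
open scoped Classical

/-!
Write `w(D) = Σ_{c ∈ D} α_c m_c`. The servers compatible with the types `U(T)` served only by
`T` all lie in `T`, so complete resource pooling applied to `D = U(T)` gives
`|T| / w(U(T)) > |S| / w(C)` for the leading block. For the trailing block `T`, the types not
compatible with `T` are exactly `U(Tᶜ)`, so the same bound for `Tᶜ` says that `|S| / w(C)` lies
below `(|S| - |T|) / (w(C) - w(C(T)))`; since `|S| / w(C)` is the mediant of this fraction and
`|T| / w(C(T))`, it lies above the latter. When `C(T) = C` the inequality is immediate because `T`
misses the leading block.
-/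

section Mediant

variable {K : Type*} [Field K] [LinearOrder K] [IsStrictOrderedRing K]

theorem div_lt_div_of_div_lt_sub_div_sub {a b c d : K} (hd : 0 < d) (hdb : d < b)
    (h : a / b < (a - c) / (b - d)) : c / d < a / b := by
  have hb : 0 < b := hd.trans hdb
  rw [div_lt_div_iff₀ hb (sub_pos.2 hdb)] at h
  rw [div_lt_div_iff₀ hd hb]
  linarith

end Mediant

noncomputable section

namespace ResourcePooling

variable {Srv Cst : Type*} [Fintype Srv] [Fintype Cst] (G : Srv → Cst → Prop)

/-- The paper's `S(D)`. -/
def servers (D : Finset Cst) : Finset Srv := univ.filter fun s => ∃ c ∈ D, G s c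

/-- The paper's `C(T)`. -/
def compatibleTypes (T : Finset Srv) : Finset Cst := univ.filter fun c => ∃ s ∈ T, G s c

/-- The paper's `U(T) = C \ C(S \ T)`. -/
def uniqueTypes (T : Finset Srv) : Finset Cst := univ.filter fun c => ∀ s, G s c → s ∈ T

/-- The weight `w c` stands for the paper's `α_c m_c`. -/
def CompleteResourcePooling (w : Cst → ℝ) : Prop :=
  ∀ D : Finset Cst, D.Nonempty → D ≠ univ →
    ((servers G D).card : ℝ) / (Fintype.card Srv : ℝ) > (∑ c ∈ D, w c) / (∑ c, w c)

variable {G}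

theorem servers_uniqueTypes_subset (T : Finset Srv) : servers G (uniqueTypes G T) ⊆ T := by
  intro s hs
  obtain ⟨c, hc, hsc⟩ := (mem_filter.1 hs).2
  exact (mem_filter.1 hc).2 s hsc

theorem uniqueTypes_compl (T : Finset Srv) : uniqueTypes G Tᶜ = (compatibleTypes G T)ᶜ := by
  ext c
  simp [uniqueTypes, compatibleTypes, imp_not_comm]

theorem uniqueTypes_ne_univ {T T' : Finset Srv} (hTT' : Disjoint T T')
    (hC : (compatibleTypes G T').Nonempty) : uniqueTypes G T ≠ univ := by
  obtain ⟨c, hc⟩ := hC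
  obtain ⟨s, hsT', hsc⟩ := (mem_filter.1 hc).2
  intro hU
  have hsT : s ∈ T := (mem_filter.1 (hU ▸ mem_univ c : c ∈ uniqueTypes G T)).2 s hsc
  exact disjoint_left.1 hTT' hsT hsT'

variable {w : Cst → ℝ}

theorem card_pos_of_completeResourcePooling (hw : ∀ c, 0 < w c)
    (hCRP : CompleteResourcePooling G w) {D : Finset Cst} (hD : D.Nonempty) (hDu : D ≠ univ) :
    0 < Fintype.card Srv := by
  have hpos : 0 < (∑ c ∈ D, w c) / (∑ c, w c) :=
    div_pos (sum_pos (fun c _ => hw c) hD)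
      (sum_pos (fun c _ => hw c) (univ_nonempty_iff.2 hD.to_type))
  refine Nat.pos_of_ne_zero fun h => ?_
  have := hCRP D hD hDu
  rw [h, Nat.cast_zero, div_zero] at this
  linarith

theorem lt_card_div_sum_uniqueTypes (hw : ∀ c, 0 < w c) (hCRP : CompleteResourcePooling G w)
    {T : Finset Srv} (hU : (uniqueTypes G T).Nonempty) (hUu : uniqueTypes G T ≠ univ) :
    (Fintype.card Srv : ℝ) / (∑ c, w c) < (T.card : ℝ) / (∑ c ∈ uniqueTypes G T, w c) := by
  have hS : (0 : ℝ) < Fintype.card Srv := by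
    exact_mod_cast card_pos_of_completeResourcePooling hw hCRP hU hUu
  have hW : 0 < ∑ c, w c := sum_pos (fun c _ => hw c) (univ_nonempty_iff.2 hU.to_type)
  have hWU : 0 < ∑ c ∈ uniqueTypes G T, w c := sum_pos (fun c _ => hw c) hU
  have hcard : ((servers G (uniqueTypes G T)).card : ℝ) ≤ T.card := by
    exact_mod_cast card_le_card (servers_uniqueTypes_subset T)
  have h := (hCRP _ hU hUu).trans_le (div_le_div_of_nonneg_right hcard hS.le)
  rw [div_lt_div_iff₀ hW hS] at h
  rw [div_lt_div_iff₀ hW hWU]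
  linarith

theorem card_div_sum_compatibleTypes_lt (hw : ∀ c, 0 < w c) (hCRP : CompleteResourcePooling G w)
    {T : Finset Srv} (hC : (compatibleTypes G T).Nonempty) (hTu : T ≠ univ) :
    (T.card : ℝ) / (∑ c ∈ compatibleTypes G T, w c) < (Fintype.card Srv : ℝ) / (∑ c, w c) := by
  have hWC : 0 < ∑ c ∈ compatibleTypes G T, w c := sum_pos (fun c _ => hw c) hC
  have hT : (T.card : ℝ) < Fintype.card Srv := by exact_mod_cast (card_lt_iff_ne_univ T).2 hTu
  by_cases hCu : compatibleTypes G T = univ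
  · rw [hCu] at hWC ⊢
    exact div_lt_div_of_pos_right hT hWC
  have hUc : (uniqueTypes G Tᶜ).Nonempty := by
    rw [uniqueTypes_compl, nonempty_iff_ne_empty, Ne, compl_eq_empty_iff]
    exact hCu
  have hUcu : uniqueTypes G Tᶜ ≠ univ := by
    rw [uniqueTypes_compl, Ne, compl_eq_univ_iff]
    exact hC.ne_empty
  have hsplit := sum_compl_add_sum (compatibleTypes G T) w
  have hWCc : 0 < ∑ c ∈ (compatibleTypes G T)ᶜ, w c := by
    rw [← uniqueTypes_compl]
    exact sum_pos (fun c _ => hw c) hUc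
  have h := lt_card_div_sum_uniqueTypes hw hCRP hUc hUcu
  rw [uniqueTypes_compl, card_compl, Nat.cast_sub (card_le_univ T), eq_sub_of_add_eq hsplit] at h
  exact div_lt_div_of_div_lt_sub_div_sub hWC (by linarith) h

end ResourcePooling

end

open ResourcePooling

/-- In the customer-dependent case, if the complete resource pooling condition
`|S(D)|/|S| > (Σ_{c∈D} α_c m_c)/(Σ_{c∈C} α_c m_c)` holds for every nonempty proper
`D ⊊ C`, then for any ordered partition `(S_1,…,S_L)` of the servers with `L ≥ 2`
and `U(S_1) ≠ ∅`, the leading velocity exceeds the pooled velocity, which exceeds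
the trailing velocity. -/
theorem cd_pooling_velocity_inequalities {Srv Cst : Type*} [Fintype Srv] [Fintype Cst]
    (G : Srv → Cst → Prop) (m α : Cst → ℝ)
    (hm : ∀ c, 0 < m c) (hα : ∀ c, 0 < α c)
    (hCRP : ∀ D : Finset Cst, D.Nonempty → D ≠ Finset.univ →
      ((Finset.univ.filter (fun s => ∃ c ∈ D, G s c)).card : ℝ) / (Fintype.card Srv : ℝ) >
        (∑ c ∈ D, α c * m c) / (∑ c : Cst, α c * m c))
    (L : ℕ) (hL : 2 ≤ L) (P : Fin L → Finset Srv)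
    (hdisj : ∀ i j, i ≠ j → Disjoint (P i) (P j))
    (hne : ∀ i, (P i).Nonempty)
    (S1 SL : Finset Srv) (hS1 : S1 = P ⟨0, by omega⟩) (hSL : SL = P ⟨L - 1, by omega⟩)
    (hU1 : (Finset.univ.filter (fun c => ∀ s, G s c → s ∈ S1)).Nonempty)
    (hCL : (Finset.univ.filter (fun c => ∃ s ∈ SL, G s c)).Nonempty) :
    (S1.card : ℝ) / (∑ c ∈ Finset.univ.filter (fun c => ∀ s, G s c → s ∈ S1), α c * m c) >
        (Fintype.card Srv : ℝ) / (∑ c : Cst, α c * m c) ∧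
    (Fintype.card Srv : ℝ) / (∑ c : Cst, α c * m c) >
        (SL.card : ℝ) / (∑ c ∈ Finset.univ.filter (fun c => ∃ s ∈ SL, G s c), α c * m c) := by
  have hw : ∀ c, 0 < α c * m c := fun c => mul_pos (hα c) (hm c)
  have hpool : CompleteResourcePooling G (fun c => α c * m c) := hCRP
  have hS1SL : Disjoint S1 SL := by
    rw [hS1, hSL]
    exact hdisj _ _ fun h => by simp only [Fin.mk.injEq] at h; omega
  have hSLu : SL ≠ univ := by
    obtain ⟨s, hs⟩ := hS1 ▸ hne _
    exact fun h => disjoint_left.1 hS1SL hs (h ▸ mem_univ s)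
  exact ⟨lt_card_div_sum_uniqueTypes hw hpool hU1 (uniqueTypes_ne_univ hS1SL hCL),
    card_div_sum_compatibleTypes_lt hw hpool hCL hSLu⟩
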